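/- (Order of vanishing of the electric source term, Lemmas 4.2–4.3 in the text) Let N ≥ 2 and let A be the (N−1)×(N−1) matrix of the context. Suppose v_1,…,v_{N−1} ∈ ℝ^{N−1} and row vectors σ^1,…,σ^{N−1} satisfy A v_a = a(a+1) v_a, σ^a A = a(a+1) σ^a, and σ^a · v_b = d_a δ_{ab} with d_a ≠ 0 for all a, b ∈ {1,…,N−1}. Define d^a_{rs} = d_a^{−1} Σ_{i=1}^{N−1} σ^a_i v^i_r v^i_s and d^a_{rst} = d_a^{−1} Σ_{i=1}^{N−1} σ^a_i v^i_r v^i_s v^i_t, and assume d^a_{rs} = 0 whenever r + s ≤ a and d^a_{rst} = 0 whenever r + s + t ≤ a. Let β̄_1,…,β̄_{N−1} and θ̄_1,…,θ̄_{N−1} be real-analytic functions in a neighbourhood of 0, and define, for i = 1,…,N−1, u^i(x) = 1 + Σ_{a=1}^{N−1} β̄_a(x) v^i_a x^{a+1}, E^i(x) = Σ_{a=1}^{N−1} θ̄_a(x) v^i_a x^a, and Z(x) = A·w(x) where w^i(x) = u^i(x)² E^i(x). Then for each a ∈ {1,…,N−1}, the function x ↦ σ^a·Z(x) − a(a+1)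 σ^a·E(x) is real-analytic near 0 and vanishes to order at least a+2 at x = 0; equivalently σ^a·Z(x) = a(a+1) d_a θ̄_a(x) x^a + x^{a+2}·g(x) for some function g analytic at 0. -/
import Mathlib


open scoped BigOperators

noncomputable section

/-- Entry `(i,j)` (actual indices `1 ≤ i,j ≤ N-1`) of the matrix
`A_{ij} = (2δ_{ij} − δ_{j,i−1} − δ_{j,i+1})·j(N−j)`. -/
def Aentry (N i j : ℕ) : ℝ :=
  ((if i = j then 2 else 0) - (if j + 1 = i then 1 else 0)
      - (if i + 1 = j then 1 else 0))
    * ((j : ℝ) * ((N : ℝ) - (j : ℝ)))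

lemma mul_sum_mul_sum' (s t : Finset ℕ) (w : ℝ) (f g : ℕ → ℝ) :
    w * ((∑ b ∈ s, f b) * (∑ c ∈ t, g c)) = ∑ b ∈ s, ∑ c ∈ t, w * (f b * g c) := by
  rw [Finset.sum_mul_sum, Finset.mul_sum]
  exact Finset.sum_congr rfl fun b _ => by rw [Finset.mul_sum]

lemma mul_sum_mul_sum_mul_sum' (s t r : Finset ℕ) (w : ℝ) (f g h : ℕ → ℝ) :
    w * ((∑ b ∈ s, f b) * (∑ c ∈ t, g c) * (∑ e ∈ r, h e))
      = ∑ b ∈ s, ∑ c ∈ t, ∑ e ∈ r, w * (f b * g c * h e) := by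
  rw [Finset.sum_mul_sum, Finset.sum_mul, Finset.mul_sum]
  refine Finset.sum_congr rfl fun b _ => ?_
  rw [Finset.sum_mul, Finset.mul_sum]
  refine Finset.sum_congr rfl fun c _ => ?_
  rw [Finset.mul_sum, Finset.mul_sum]

/-- Order of vanishing of the electric source term (Lemmas 4.2–4.3): with eigenvector
data for `A` and analytic coefficient functions `β̄_a`, `θ̄_a`, the quantity
`σ^a·Z(x) − a(a+1) σ^a·E(x)` is analytic near `0` and vanishes there to order at least
`a+2`; equivalently `σ^a·Z(x) = a(a+1) d_a θ̄_a(x) x^a + x^{a+2} g(x)` with `g` analytic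
at `0`. -/
theorem electric_source_order
    (N : ℕ) (hN : 2 ≤ N)
    (v σ : ℕ → ℕ → ℝ) (d : ℕ → ℝ)
    (hd : ∀ a, 1 ≤ a → a ≤ N - 1 → d a ≠ 0)
    (hrev : ∀ a, 1 ≤ a → a ≤ N - 1 → ∀ i, 1 ≤ i → i ≤ N - 1 →
      ∑ j ∈ Finset.Icc 1 (N - 1), Aentry N i j * v a j = (a : ℝ) * ((a : ℝ) + 1) * v a i)
    (hlev : ∀ a, 1 ≤ a → a ≤ N - 1 → ∀ j, 1 ≤ j → j ≤ N - 1 →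
      ∑ i ∈ Finset.Icc 1 (N - 1), σ a i * Aentry N i j = (a : ℝ) * ((a : ℝ) + 1) * σ a j)
    (hbi : ∀ a b, 1 ≤ a → a ≤ N - 1 → 1 ≤ b → b ≤ N - 1 →
      ∑ i ∈ Finset.Icc 1 (N - 1), σ a i * v b i = if a = b then d a else 0)
    (hd2 : ∀ a r s, 1 ≤ a → a ≤ N - 1 → 1 ≤ r → r ≤ N - 1 → 1 ≤ s → s ≤ N - 1 →
      r + s ≤ a →
      (d a)⁻¹ * ∑ i ∈ Finset.Icc 1 (N - 1), σ a i * v r i * v s i = 0)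
    (hd3 : ∀ a r s t, 1 ≤ a → a ≤ N - 1 → 1 ≤ r → r ≤ N - 1 → 1 ≤ s → s ≤ N - 1 →
      1 ≤ t → t ≤ N - 1 → r + s + t ≤ a →
      (d a)⁻¹ * ∑ i ∈ Finset.Icc 1 (N - 1), σ a i * v r i * v s i * v t i = 0)
    (βb θb : ℕ → ℝ → ℝ)
    (hβ : ∀ a, 1 ≤ a → a ≤ N - 1 → AnalyticAt ℝ (βb a) 0)
    (hθ : ∀ a, 1 ≤ a → a ≤ N - 1 → AnalyticAt ℝ (θb a) 0) :
    let u : ℕ → ℝ → ℝ := fun i x =>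
      1 + ∑ a ∈ Finset.Icc 1 (N - 1), βb a x * v a i * x ^ (a + 1)
    let E : ℕ → ℝ → ℝ := fun i x =>
      ∑ a ∈ Finset.Icc 1 (N - 1), θb a x * v a i * x ^ a
    let Z : ℕ → ℝ → ℝ := fun i x =>
      ∑ j ∈ Finset.Icc 1 (N - 1), Aentry N i j * ((u j x) ^ 2 * E j x)
    ∀ a, 1 ≤ a → a ≤ N - 1 →
      AnalyticAt ℝ
        (fun x => (∑ i ∈ Finset.Icc 1 (N - 1), σ a i * Z i x)
          - (a : ℝ) * ((a : ℝ) + 1) * ∑ i ∈ Finset.Icc 1 (N - 1), σ a i * E i x) 0 ∧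
      ∃ g : ℝ → ℝ, AnalyticAt ℝ g 0 ∧ ∀ x : ℝ,
        ∑ i ∈ Finset.Icc 1 (N - 1), σ a i * Z i x
          = (a : ℝ) * ((a : ℝ) + 1) * d a * θb a x * x ^ a + x ^ (a + 2) * g x := by
  intro u E Z a ha1 ha2
  have hdne : d a ≠ 0 := hd a ha1 ha2
  have haI : a ∈ Finset.Icc 1 (N - 1) := Finset.mem_Icc.mpr ⟨ha1, ha2⟩
  set I := Finset.Icc 1 (N - 1) with hIdef
  have hmem : ∀ b ∈ I, 1 ≤ b ∧ b ≤ N - 1 := fun b hb => Finset.mem_Icc.mp hb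
  -- vanishing of the structure constants
  have hT2z : ∀ b ∈ I, ∀ c ∈ I, b + c ≤ a → (∑ i ∈ I, σ a i * v b i * v c i) = 0 := by
    intro b hb c hc hbc
    obtain ⟨hb1, hb2⟩ := hmem b hb; obtain ⟨hc1, hc2⟩ := hmem c hc
    have h := hd2 a b c ha1 ha2 hb1 hb2 hc1 hc2 hbc
    exact (mul_eq_zero.mp h).resolve_left (inv_ne_zero hdne)
  have hT3z : ∀ b ∈ I, ∀ c ∈ I, ∀ e ∈ I, b + c + e ≤ a →
      (∑ i ∈ I, σ a i * v b i * v c i * v e i) = 0 := by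
    intro b hb c hc e he hbce
    obtain ⟨hb1, hb2⟩ := hmem b hb; obtain ⟨hc1, hc2⟩ := hmem c hc
    obtain ⟨he1, he2⟩ := hmem e he
    have h := hd3 a b c e ha1 ha2 hb1 hb2 hc1 hc2 he1 he2 hbce
    exact (mul_eq_zero.mp h).resolve_left (inv_ne_zero hdne)
  -- σ·E
  have hE0 : ∀ x : ℝ, ∑ i ∈ I, σ a i * E i x = d a * θb a x * x ^ a := by
    intro x
    simp only [E, Finset.mul_sum]
    rw [Finset.sum_comm]
    have h1 : ∀ b ∈ I, ∑ i ∈ I, σ a i * (θb b x * v b i * x ^ b)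
        = (if a = b then d a else 0) * (θb b x * x ^ b) := by
      intro b hb
      obtain ⟨hb1, hb2⟩ := hmem b hb
      rw [← hbi a b ha1 ha2 hb1 hb2, Finset.sum_mul]
      exact Finset.sum_congr rfl fun i _ => by ring
    rw [Finset.sum_congr rfl h1]
    simp only [ite_mul, zero_mul, Finset.sum_ite_eq, haI, if_true]
    ring
  -- swap using left eigenvector property
  -- swap using left eigenvector property
  have hswap : ∀ x : ℝ, ∑ i ∈ I, σ a i * Z i x
      = (a : ℝ) * ((a : ℝ) + 1) * ∑ j ∈ I, σ a j * (u j x ^ 2 * E j x) := by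
    intro x
    simp only [Z, Finset.mul_sum]
    rw [Finset.sum_comm]
    refine Finset.sum_congr rfl fun j hj => ?_
    obtain ⟨hj1, hj2⟩ := hmem j hj
    have h := hlev a ha1 ha2 j hj1 hj2
    calc ∑ i ∈ I, σ a i * (Aentry N i j * (u j x ^ 2 * E j x))
        = (∑ i ∈ I, σ a i * Aentry N i j) * (u j x ^ 2 * E j x) := by
          rw [Finset.sum_mul]
          exact Finset.sum_congr rfl fun i _ => by ring
      _ = (a : ℝ) * ((a : ℝ) + 1) * (σ a j * (u j x ^ 2 * E j x)) := by rw [h]; ring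
  -- quadratic piece
  have hP1 : ∀ x : ℝ, ∑ j ∈ I, σ a j * ((∑ b ∈ I, βb b x * v b j * x ^ (b + 1)) * E j x)
      = ∑ b ∈ I, ∑ c ∈ I,
          βb b x * θb c x * (∑ i ∈ I, σ a i * v b i * v c i) * x ^ (b + c + 1) := by
    intro x
    simp only [E]
    rw [Finset.sum_congr rfl (fun j (_ : j ∈ I) => mul_sum_mul_sum' I I (σ a j)
      (fun b => βb b x * v b j * x ^ (b + 1)) (fun c => θb c x * v c j * x ^ c))]
    rw [Finset.sum_comm]
    refine Finset.sum_congr rfl fun b _ => ?_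
    rw [Finset.sum_comm]
    refine Finset.sum_congr rfl fun c _ => ?_
    rw [show βb b x * θb c x * (∑ i ∈ I, σ a i * v b i * v c i) * x ^ (b + c + 1)
        = (∑ i ∈ I, σ a i * v b i * v c i) * (βb b x * θb c x * x ^ (b + c + 1))
        from by ring, Finset.sum_mul]
    refine Finset.sum_congr rfl fun i _ => ?_
    rw [show b + c + 1 = (b + 1) + c by omega, pow_add]
    ring
  -- cubic piece
  have hP2 : ∀ x : ℝ, ∑ j ∈ I, σ a j * ((∑ b ∈ I, βb b x * v b j * x ^ (b + 1))
        * (∑ c ∈ I, βb c x * v c j * x ^ (c + 1)) * E j x)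
      = ∑ b ∈ I, ∑ c ∈ I, ∑ e ∈ I,
          βb b x * βb c x * θb e x * (∑ i ∈ I, σ a i * v b i * v c i * v e i)
            * x ^ (b + c + e + 2) := by
    intro x
    simp only [E]
    rw [Finset.sum_congr rfl (fun j (_ : j ∈ I) => mul_sum_mul_sum_mul_sum' I I I (σ a j)
      (fun b => βb b x * v b j * x ^ (b + 1)) (fun c => βb c x * v c j * x ^ (c + 1))
      (fun e => θb e x * v e j * x ^ e))]
    rw [Finset.sum_comm]
    refine Finset.sum_congr rfl fun b _ => ?_
    rw [Finset.sum_comm]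
    refine Finset.sum_congr rfl fun c _ => ?_
    rw [Finset.sum_comm]
    refine Finset.sum_congr rfl fun e _ => ?_
    rw [show βb b x * βb c x * θb e x * (∑ i ∈ I, σ a i * v b i * v c i * v e i)
          * x ^ (b + c + e + 2)
        = (∑ i ∈ I, σ a i * v b i * v c i * v e i)
          * (βb b x * βb c x * θb e x * x ^ (b + c + e + 2)) from by ring,
      Finset.sum_mul]
    refine Finset.sum_congr rfl fun i _ => ?_
    rw [show b + c + e + 2 = (b + 1) + ((c + 1) + e) by omega, pow_add, pow_add]
    ring
  -- expand the square
  have hexp : ∀ x : ℝ, ∀ j ∈ I, σ a j * (u j x ^ 2 * E j x)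
      = σ a j * E j x
        + 2 * (σ a j * ((∑ b ∈ I, βb b x * v b j * x ^ (b + 1)) * E j x))
        + σ a j * ((∑ b ∈ I, βb b x * v b j * x ^ (b + 1))
            * (∑ c ∈ I, βb c x * v c j * x ^ (c + 1)) * E j x) := by
    intro x j _
    simp only [u]
    ring
  -- key identity
  have hkey : ∀ x : ℝ, ∑ i ∈ I, σ a i * Z i x
      = (a : ℝ) * ((a : ℝ) + 1) * (d a * θb a x * x ^ a
          + 2 * ∑ b ∈ I, ∑ c ∈ I,
              βb b x * θb c x * (∑ i ∈ I, σ a i * v b i * v c i) * x ^ (b + c + 1)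
          + ∑ b ∈ I, ∑ c ∈ I, ∑ e ∈ I,
              βb b x * βb c x * θb e x * (∑ i ∈ I, σ a i * v b i * v c i * v e i)
                * x ^ (b + c + e + 2)) := by
    intro x
    rw [hswap x, Finset.sum_congr rfl (hexp x), Finset.sum_add_distrib,
      Finset.sum_add_distrib, hE0 x, ← Finset.mul_sum, hP1 x, hP2 x]
  -- the analytic remainder
  set g : ℝ → ℝ := fun x =>
    (a : ℝ) * ((a : ℝ) + 1) * (2 * ∑ b ∈ I, ∑ c ∈ I,
        βb b x * θb c x * (∑ i ∈ I, σ a i * v b i * v c i) * x ^ (b + c - 1 - a)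
      + ∑ b ∈ I, ∑ c ∈ I, ∑ e ∈ I,
          βb b x * βb c x * θb e x * (∑ i ∈ I, σ a i * v b i * v c i * v e i)
            * x ^ (b + c + e - a)) with hgdef
  have hmain : ∀ x : ℝ, ∑ i ∈ I, σ a i * Z i x
      = (a : ℝ) * ((a : ℝ) + 1) * d a * θb a x * x ^ a + x ^ (a + 2) * g x := by
    intro x
    rw [hkey x]
    have e1 : x ^ (a + 2) * ∑ b ∈ I, ∑ c ∈ I,
          βb b x * θb c x * (∑ i ∈ I, σ a i * v b i * v c i) * x ^ (b + c - 1 - a)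
        = ∑ b ∈ I, ∑ c ∈ I,
            βb b x * θb c x * (∑ i ∈ I, σ a i * v b i * v c i) * x ^ (b + c + 1) := by
      rw [Finset.mul_sum]
      refine Finset.sum_congr rfl fun b hb => ?_
      rw [Finset.mul_sum]
      refine Finset.sum_congr rfl fun c hc => ?_
      by_cases hle : a + 1 ≤ b + c
      · rw [show b + c + 1 = (a + 2) + (b + c - 1 - a) by omega, pow_add]
        ring
      · rw [hT2z b hb c hc (by omega)]
        ring
    have e2 : x ^ (a + 2) * ∑ b ∈ I, ∑ c ∈ I, ∑ e ∈ I,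
          βb b x * βb c x * θb e x * (∑ i ∈ I, σ a i * v b i * v c i * v e i)
            * x ^ (b + c + e - a)
        = ∑ b ∈ I, ∑ c ∈ I, ∑ e ∈ I,
            βb b x * βb c x * θb e x * (∑ i ∈ I, σ a i * v b i * v c i * v e i)
              * x ^ (b + c + e + 2) := by
      rw [Finset.mul_sum]
      refine Finset.sum_congr rfl fun b hb => ?_
      rw [Finset.mul_sum]
      refine Finset.sum_congr rfl fun c hc => ?_
      rw [Finset.mul_sum]
      refine Finset.sum_congr rfl fun e he => ?_
      by_cases hle : a + 1 ≤ b + c + e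
      · rw [show b + c + e + 2 = (a + 2) + (b + c + e - a) by omega, pow_add]
        ring
      · rw [hT3z b hb c hc e he (by omega)]
        ring
    rw [hgdef]
    rw [show x ^ (a + 2) * ((fun x : ℝ => (a : ℝ) * ((a : ℝ) + 1) * (2 * ∑ b ∈ I, ∑ c ∈ I,
          βb b x * θb c x * (∑ i ∈ I, σ a i * v b i * v c i) * x ^ (b + c - 1 - a)
        + ∑ b ∈ I, ∑ c ∈ I, ∑ e ∈ I,
            βb b x * βb c x * θb e x * (∑ i ∈ I, σ a i * v b i * v c i * v e i)
              * x ^ (b + c + e - a))) x)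
        = (a : ℝ) * ((a : ℝ) + 1) * (2 * (x ^ (a + 2) * ∑ b ∈ I, ∑ c ∈ I,
            βb b x * θb c x * (∑ i ∈ I, σ a i * v b i * v c i) * x ^ (b + c - 1 - a))
          + x ^ (a + 2) * ∑ b ∈ I, ∑ c ∈ I, ∑ e ∈ I,
              βb b x * βb c x * θb e x * (∑ i ∈ I, σ a i * v b i * v c i * v e i)
                * x ^ (b + c + e - a)) from by ring, e1, e2]
    ring
  -- analyticity of g
  have hg : AnalyticAt ℝ g 0 := by
    rw [hgdef]
    apply analyticAt_const.mul
    apply AnalyticAt.add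
    · apply analyticAt_const.mul
      refine Finset.analyticAt_fun_sum _ fun b hb => ?_
      refine Finset.analyticAt_fun_sum _ fun c hc => ?_
      obtain ⟨hb1, hb2⟩ := hmem b hb
      obtain ⟨hc1, hc2⟩ := hmem c hc
      exact (((hβ b hb1 hb2).mul (hθ c hc1 hc2)).mul analyticAt_const).mul
        (analyticAt_id.pow _)
    · refine Finset.analyticAt_fun_sum _ fun b hb => ?_
      refine Finset.analyticAt_fun_sum _ fun c hc => ?_
      refine Finset.analyticAt_fun_sum _ fun e he => ?_
      obtain ⟨hb1, hb2⟩ := hmem b hb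
      obtain ⟨hc1, hc2⟩ := hmem c hc
      obtain ⟨he1, he2⟩ := hmem e he
      exact ((((hβ b hb1 hb2).mul (hβ c hc1 hc2)).mul (hθ e he1 he2)).mul
        analyticAt_const).mul (analyticAt_id.pow _)
  have heq : (fun x : ℝ => (∑ i ∈ I, σ a i * Z i x)
        - (a : ℝ) * ((a : ℝ) + 1) * ∑ i ∈ I, σ a i * E i x)
      = fun x : ℝ => x ^ (a + 2) * g x := by
    funext x
    rw [hmain x, hE0 x]
    ring
  refine ⟨?_, g, hg, hmain⟩
  rw [heq]
  exact (analyticAt_id.pow _).mul hg
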